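/- arXiv:0710.5787 — 2 statements merged into one kernel-verified Lean document; each statement's English description precedes it below -/
import Mathlib

section
/- Let Γ be a cocompact Kleinian group, let α ∈ comm(Γ) \ Γ, let T ∈ Γα⁻¹Γ, and let T₀ be a loxodromic element of the centralizer C_Γ(T) whose norm N(T₀) is minimal among the norms of all loxodromic elements of C_Γ(T). Then T₀ is primitive in Γ, i.e., there is no S ∈ Γ and integer m ≥ 2 with Sᵐ = T₀. -/
open Matrix Complex Pointwise

/-- `SL(2,ℂ)`. -/
abbrev SL2C := Matrix.SpecialLinearGroup (Fin 2) ℂ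

/-- The topology on `SL(2,ℂ)` induced from the matrix entries. -/
noncomputable instance : TopologicalSpace SL2C :=
  TopologicalSpace.induced (fun A => (A : Matrix (Fin 2) (Fin 2) ℂ)) inferInstance

/-- `PSL(2,ℂ)`, the quotient of `SL(2,ℂ)` by its center `{±I}`,
equipped with the quotient topology. -/
abbrev PSL2C := SL2C ⧸ Subgroup.center SL2C

/-- The diagonal matrix `diag(a, a⁻¹)` as an element of `SL(2,ℂ)`. -/
noncomputable def dMat (a : ℂ) (h : a ≠ 0) : SL2C :=
  ⟨!![a, 0; 0, a⁻¹], by rw [Matrix.det_fin_two_of]; simp [mul_inv_cancel₀ h]⟩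

/-- The projection `SL(2,ℂ) → PSL(2,ℂ)`. -/
def projMk : SL2C →* PSL2C := QuotientGroup.mk' _

/-- `T ∈ PSL(2,ℂ)` is loxodromic with diagonal parameter `a`: it is conjugate in
`PSL(2,ℂ)` to (the class of) `diag(a, a⁻¹)` with `|a| > 1`.  Its norm is `N(T) = |a|²`. -/
def IsLoxodromicWith (T : PSL2C) (a : ℂ) : Prop :=
  ∃ h : a ≠ 0, 1 < ‖a‖ ∧ IsConj (projMk (dMat a h)) T

/-- `T ∈ PSL(2,ℂ)` is loxodromic. -/
def IsLoxodromic (T : PSL2C) : Prop := ∃ a : ℂ, IsLoxodromicWith T a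

/-- `T ∈ PSL(2,ℂ)` is elliptic: a nonidentity element conjugate to (the class of)
`diag(e^{iφ/2}, e^{-iφ/2})` for some real `φ`. -/
def IsElliptic (T : PSL2C) : Prop :=
  T ≠ 1 ∧ ∃ φ : ℝ,
    IsConj (projMk (dMat (Complex.exp (φ * Complex.I / 2)) (Complex.exp_ne_zero _))) T

/-- `T ∈ PSL(2,ℂ)` is parabolic: a nonidentity element whose trace squared equals `4`. -/
def IsParabolic (T : PSL2C) : Prop :=
  T ≠ 1 ∧ ∃ S : SL2C, projMk S = T ∧ (Matrix.trace (S : Matrix (Fin 2) (Fin 2) ℂ)) ^ 2 = 4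

/-- The conjugate subgroup `α⁻¹ Γ α`. -/
def conjSG (Γ : Subgroup PSL2C) (α : PSL2C) : Subgroup PSL2C :=
  Γ.map (MulAut.conj α⁻¹).toMonoidHom

/-- `α` belongs to the commensurator of `Γ` in `PSL(2,ℂ)`: both indices
`[Γ : Γ ∩ α⁻¹Γα]` and `[α⁻¹Γα : Γ ∩ α⁻¹Γα]` are finite. -/
def InCommensurator (Γ : Subgroup PSL2C) (α : PSL2C) : Prop :=
  (conjSG Γ α).relIndex Γ ≠ 0 ∧ Γ.relIndex (conjSG Γ α) ≠ 0

/-- The double coset `Γ g Γ = {γ₁ g γ₂ : γ₁, γ₂ ∈ Γ}`. -/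
def doubleCoset (Γ : Subgroup PSL2C) (g : PSL2C) : Set PSL2C :=
  {x | ∃ γ₁ ∈ Γ, ∃ γ₂ ∈ Γ, x = γ₁ * g * γ₂}

/-- The centralizer `C_Γ(T) = {σ ∈ Γ : σT = Tσ}` of `T` in `Γ`, as a subgroup. -/
def centIn (Γ : Subgroup PSL2C) (T : PSL2C) : Subgroup PSL2C :=
  Γ ⊓ Subgroup.centralizer {T}

/-- `R` is primitive in `Γ`: there is no `S ∈ Γ` and integer `m ≥ 2` with `Sᵐ = R`. -/
def IsPrimitive (Γ : Subgroup PSL2C) (R : PSL2C) : Prop :=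
  ¬ ∃ S ∈ Γ, ∃ m : ℕ, 2 ≤ m ∧ S ^ m = R

/-!
Conjugate the loxodromic `T₀` to the class `D` of `diag(a, a⁻¹)`. As `a⁴ ≠ 1`, everything commuting
with `D` in `PSL(2,ℂ)` is diagonal, so any two elements commuting with `T₀` commute with each other.
If `T₀ = Sᵐ` with `S ∈ Γ` and `m ≥ 2`, then `S` commutes with `T₀`, hence with `T`, so `S ∈ C_Γ(T)`;
moreover `S` is conjugate to `diag(b, b⁻¹)` with `|b|ᵐ = |a|`, so `S` is loxodromic of norm
`|b|² < |a|²`, contradicting the minimality of `N(T₀)`.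
-/

noncomputable def dMatHom : ℂˣ →* SL2C where
  toFun u := dMat u u.ne_zero
  map_one' := Subtype.ext <| by simp [dMat, Matrix.one_fin_two]
  map_mul' u v := Subtype.ext <| by
    rw [Matrix.SpecialLinearGroup.coe_mul]
    simp [dMat, mul_comm]

lemma commute_projMk_dMat {b t : ℂ} (hb : b ≠ 0) (ht : t ≠ 0) :
    Commute (projMk (dMat b hb)) (projMk (dMat t ht)) :=
  (Commute.all (Units.mk0 b hb) (Units.mk0 t ht)).map (projMk.comp dMatHom)

lemma projMk_dMat_pow {b : ℂ} (hb : b ≠ 0) (m : ℕ) :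
    projMk (dMat b hb) ^ m = projMk (dMat (b ^ m) (pow_ne_zero m hb)) :=
  (map_pow (projMk.comp dMatHom) (Units.mk0 b hb) m).symm

lemma norm_eq_of_projMk_dMat_eq {x y : ℂ} {hx : x ≠ 0} {hy : y ≠ 0}
    (h : projMk (dMat x hx) = projMk (dMat y hy)) : ‖x‖ = ‖y‖ := by
  rw [projMk, QuotientGroup.mk'_eq_mk'] at h
  obtain ⟨z, hz, hxz⟩ := h
  obtain ⟨r, hr, hrz⟩ := Matrix.SpecialLinearGroup.mem_center_iff.mp hz
  have hM := congrArg (fun g : SL2C => (g : Matrix (Fin 2) (Fin 2) ℂ)) hxz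
  simp only [Matrix.SpecialLinearGroup.coe_mul, ← hrz] at hM
  have h00 : x * r = y := by
    simpa [dMat, Matrix.mul_apply, Fin.sum_univ_two] using congrFun₂ hM 0 0
  have hr1 : ‖r‖ = 1 := by
    have := congrArg norm hr
    rwa [Fintype.card_fin, norm_pow, norm_one, pow_eq_one_iff_of_nonneg (norm_nonneg r) two_ne_zero]
      at this
  rw [← h00, norm_mul, hr1, mul_one]

lemma pow_four_ne_one_of_one_lt_norm {a : ℂ} (ha : 1 < ‖a‖) : a ^ 4 ≠ 1 := fun h =>
  (one_lt_pow₀ ha four_ne_zero).ne' (by simpa using congrArg norm h)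

/-- Commuting in `PSL(2,ℂ)` means `X D = ± D X` in `SL(2,ℂ)`; the sign is why `a⁴ ≠ 1`, not just
`a² ≠ 1`, is needed. -/
lemma exists_eq_dMat_of_commute {a : ℂ} (ha : a ≠ 0) (ha4 : a ^ 4 ≠ 1) {x : PSL2C}
    (hx : Commute x (projMk (dMat a ha))) : ∃ b hb, x = projMk (dMat b hb) := by
  obtain ⟨X, rfl⟩ : ∃ X, projMk X = x := QuotientGroup.mk'_surjective _ x
  rw [commute_iff_eq, ← map_mul, ← map_mul, projMk, QuotientGroup.mk'_eq_mk'] at hx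
  obtain ⟨z, hz, hXz⟩ := hx
  obtain ⟨r, hr, hrz⟩ := Matrix.SpecialLinearGroup.mem_center_iff.mp hz
  rw [Fintype.card_fin] at hr
  have hM := congrArg (fun g : SL2C => (g : Matrix (Fin 2) (Fin 2) ℂ)) hXz
  simp only [Matrix.SpecialLinearGroup.coe_mul, ← hrz] at hM
  have h01 : X 0 1 * a⁻¹ * r = a * X 0 1 := by
    simpa [dMat, Matrix.mul_apply, Fin.sum_univ_two] using congrFun₂ hM 0 1
  have h10 : X 1 0 * a * r = a⁻¹ * X 1 0 := by
    simpa [dMat, Matrix.mul_apply, Fin.sum_univ_two] using congrFun₂ hM 1 0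
  have hdet := X.2
  rw [Matrix.det_fin_two] at hdet
  have hr01 : r ≠ a ^ 2 := by
    rintro rfl
    exact ha4 (by linear_combination hr)
  have hr10 : a ^ 2 * r ≠ 1 := fun h =>
    ha4 (by linear_combination (a ^ 2 * r + 1) * h - a ^ 4 * hr)
  have hX01 : X 0 1 = 0 := by
    have : X 0 1 * (r - a ^ 2) = 0 := by
      linear_combination a * h01 - X 0 1 * r * mul_inv_cancel₀ ha
    exact (mul_eq_zero.mp this).resolve_right (sub_ne_zero.mpr hr01)
  have hX10 : X 1 0 = 0 := by
    have : X 1 0 * (a ^ 2 * r - 1) = 0 := by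
      linear_combination a * h10 + X 1 0 * mul_inv_cancel₀ ha
    exact (mul_eq_zero.mp this).resolve_right (sub_ne_zero.mpr hr10)
  rw [hX01, zero_mul, sub_zero] at hdet
  refine ⟨X 0 0, left_ne_zero_of_mul_eq_one hdet, congrArg projMk (Subtype.ext ?_)⟩
  ext i j
  fin_cases i <;> fin_cases j <;> simp [dMat, hX01, hX10, ← inv_eq_of_mul_eq_one_right hdet]

lemma IsLoxodromicWith.commute_of_commute {T₀ x y : PSL2C} {a : ℂ} (h : IsLoxodromicWith T₀ a)
    (hx : Commute x T₀) (hy : Commute y T₀) : Commute x y := by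
  obtain ⟨ha0, ha1, hconj⟩ := h
  obtain ⟨c, rfl⟩ := isConj_iff.mp hconj
  have diag (z : PSL2C) (hz : Commute z (c * projMk (dMat a ha0) * c⁻¹)) :
      ∃ b hb, MulAut.conj c⁻¹ z = projMk (dMat b hb) :=
    exists_eq_dMat_of_commute ha0 (pow_four_ne_one_of_one_lt_norm ha1)
      (by simpa [mul_assoc] using hz.map (MulAut.conj c⁻¹))
  obtain ⟨b, hb, hxb⟩ := diag x hx
  obtain ⟨t, ht, hyt⟩ := diag y hy
  rw [← commute_map_iff (MulAut.conj c⁻¹).injective, hxb, hyt]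
  exact commute_projMk_dMat hb ht

lemma IsLoxodromicWith.of_pow {S : PSL2C} {m : ℕ} {a : ℂ} (h : IsLoxodromicWith (S ^ m) a) :
    ∃ b, IsLoxodromicWith S b ∧ ‖b‖ ^ m = ‖a‖ := by
  obtain ⟨ha0, ha1, hconj⟩ := h
  obtain ⟨c, hc⟩ := isConj_iff.mp hconj
  have hD : MulAut.conj c⁻¹ (S ^ m) = projMk (dMat a ha0) := by
    rw [← hc]; simp [mul_assoc]
  obtain ⟨b, hb, hSb⟩ := exists_eq_dMat_of_commute ha0 (pow_four_ne_one_of_one_lt_norm ha1)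
    (hD ▸ (Commute.self_pow S m).map (MulAut.conj c⁻¹))
  have hnorm : ‖b‖ ^ m = ‖a‖ := by
    rw [← norm_pow]
    refine norm_eq_of_projMk_dMat_eq (hx := pow_ne_zero m hb) (hy := ha0) ?_
    rw [← projMk_dMat_pow hb, ← hSb, ← map_pow, hD]
  refine ⟨b, ⟨hb, ?_, isConj_iff.mpr ⟨c, ?_⟩⟩, hnorm⟩
  · exact lt_of_pow_lt_pow_left₀ m (norm_nonneg b) (by rw [one_pow, hnorm]; exact ha1)
  · rw [← hSb]; simp [mul_assoc]

theorem stmt_11_general (Γ : Subgroup PSL2C)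
    (T : PSL2C)
    (T₀ : PSL2C) (hT₀ : T₀ ∈ centIn Γ T)
    (a : ℂ) (ha : IsLoxodromicWith T₀ a)
    (hmin : ∀ S ∈ centIn Γ T, ∀ b : ℂ, IsLoxodromicWith S b →
      ‖a‖ ^ 2 ≤ ‖b‖ ^ 2) :
    IsPrimitive Γ T₀ := by
  rintro ⟨S, hS, m, hm, rfl⟩
  obtain ⟨b, hSb, hba⟩ := ha.of_pow
  have hT₀T : Commute T (S ^ m) := (Subgroup.mem_centralizer_singleton_iff.mp hT₀.2).symm
  have hST : Commute S T := ha.commute_of_commute (Commute.self_pow S m) hT₀T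
  have hab : ‖a‖ ^ 2 ≤ ‖b‖ ^ 2 :=
    hmin S ⟨hS, Subgroup.mem_centralizer_singleton_iff.mpr hST.eq⟩ b hSb
  have hba' : ‖b‖ ^ 2 ≤ ‖a‖ := hba ▸ pow_le_pow_right₀ hSb.2.1.le hm
  nlinarith [ha.2.1]

/-- Let `Γ` be a cocompact Kleinian group, `α ∈ comm(Γ) \ Γ`,
`T ∈ Γα⁻¹Γ`, and let `T₀` be a loxodromic element of `C_Γ(T)` of minimal norm among
loxodromic elements of `C_Γ(T)`.  Then `T₀` is primitive in `Γ`. -/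
theorem stmt_11 (Γ : Subgroup PSL2C)
    (hdisc : DiscreteTopology Γ) (hcpt : CompactSpace (PSL2C ⧸ Γ))
    (α : PSL2C) (hα : InCommensurator Γ α) (hαΓ : α ∉ Γ)
    (T : PSL2C) (hT : T ∈ doubleCoset Γ α⁻¹)
    (T₀ : PSL2C) (hT₀ : T₀ ∈ centIn Γ T)
    (a : ℂ) (ha : IsLoxodromicWith T₀ a)
    (hmin : ∀ S ∈ centIn Γ T, ∀ b : ℂ, IsLoxodromicWith S b →
      ‖a‖ ^ 2 ≤ ‖b‖ ^ 2) :
    IsPrimitive Γ T₀ :=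
  stmt_11_general Γ T T₀ hT₀ a ha hmin
end

section
/- Let Γ be a cocompact Kleinian group and let α ∈ comm(Γ) \ Γ. Then there are only finitely many Γ-conjugacy classes of elliptic elements in the double coset Γα⁻¹Γ; that is, the set { {σ⁻¹Rσ : σ ∈ Γ} : R ∈ Γα⁻¹Γ elliptic } is finite. -/
open Matrix Complex Pointwise

/-! Conjugate an elliptic `R` into the compact circle `U` of rotations `diag(e^{iφ/2}, e^{-iφ/2})`,
and move the conjugator by `Γ` into a compact set `K` mapping onto `PSL(2,ℂ)/Γ`: every
`Γ`-class of elliptic elements then meets the compact set `K⁻¹UK`. Since `α` commensurates `Γ`,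
the double coset `Γα⁻¹Γ` is a finite union of left cosets of `Γ`, and each coset of the discrete
group `Γ` meets a compact set in finitely many points. So only finitely many elements of
`Γα⁻¹Γ` lie in `K⁻¹UK`, and they represent all the classes. -/

open Set Topology

theorem IsOpenMap.exists_isCompact_image_eq_univ {X Y : Type*} [TopologicalSpace X]
    [TopologicalSpace Y] [WeaklyLocallyCompactSpace X] [CompactSpace Y] {f : X → Y}
    (hf : IsOpenMap f) (hsurj : Function.Surjective f) :
    ∃ K : Set X, IsCompact K ∧ f '' K = univ := by
  choose V hVc hVn using fun x : X => exists_compact_mem_nhds x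
  have hcover : univ ⊆ ⋃ x, f '' interior (V x) := fun y _ => by
    obtain ⟨x, rfl⟩ := hsurj y
    exact mem_iUnion.2 ⟨x, x, mem_interior_iff_mem_nhds.2 (hVn x), rfl⟩
  obtain ⟨t, ht⟩ := isCompact_univ.elim_finite_subcover _ (fun x => hf _ isOpen_interior) hcover
  refine ⟨⋃ x ∈ t, V x, t.finite_toSet.isCompact_biUnion fun x _ => hVc x,
    eq_univ_of_univ_subset (ht.trans ?_)⟩
  simp only [image_iUnion]
  exact iUnion₂_mono fun x _ => image_mono interior_subset

section TopologicalGroup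

variable {G : Type*} [Group G] [TopologicalSpace G] [IsTopologicalGroup G]

theorem Subgroup.exists_isCompact_forall_inv_mul_mem [WeaklyLocallyCompactSpace G]
    (Γ : Subgroup G) [CompactSpace (G ⧸ Γ)] :
    ∃ K : Set G, IsCompact K ∧ ∀ g, ∃ k ∈ K, k⁻¹ * g ∈ Γ := by
  obtain ⟨K, hK, hKΓ⟩ := (QuotientGroup.isOpenMap_coe (N := Γ)).exists_isCompact_image_eq_univ
    QuotientGroup.mk_surjective
  refine ⟨K, hK, fun g => ?_⟩
  obtain ⟨k, hk, hkg⟩ := hKΓ.ge (mem_univ (g : G ⧸ Γ))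
  exact ⟨k, hk, QuotientGroup.eq.1 hkg⟩

theorem Subgroup.finite_smul_inter_of_isCompact [T2Space G] (Γ : Subgroup G)
    [DiscreteTopology Γ] (g : G) {C : Set G} (hC : IsCompact C) :
    (g • (Γ : Set G) ∩ C).Finite := by
  have hfin : ((Γ : Set G) ∩ g⁻¹ • C).Finite :=
    ((hC.smul g⁻¹).inter_left Γ.isClosed_of_discrete).finite
      (isDiscrete_iff_discreteTopology.2 (DiscreteTopology.of_subset ‹_› inter_subset_left))
  convert hfin.smul_set (a := g) using 1
  rw [smul_set_inter, smul_inv_smul]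

end TopologicalGroup

section ConjClassesIn

variable {G : Type*} [Group G]

def Subgroup.conjClassIn (Γ : Subgroup G) (R : G) : Set G :=
  {x | ∃ σ ∈ Γ, x = σ⁻¹ * R * σ}

theorem Subgroup.conjClassIn_conj {Γ : Subgroup G} {γ : G} (hγ : γ ∈ Γ) (R : G) :
    Γ.conjClassIn (γ * R * γ⁻¹) = Γ.conjClassIn R := by
  ext x
  constructor
  · rintro ⟨σ, hσ, rfl⟩
    exact ⟨γ⁻¹ * σ, Γ.mul_mem (Γ.inv_mem hγ) hσ, by group⟩
  · rintro ⟨σ, hσ, rfl⟩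
    exact ⟨γ * σ, Γ.mul_mem hγ hσ, by group⟩

variable [TopologicalSpace G] [IsTopologicalGroup G]

theorem Subgroup.finite_conjClassIn_of_isConj_mem [WeaklyLocallyCompactSpace G]
    (Γ : Subgroup G) [CompactSpace (G ⧸ Γ)] {D E : Set G}
    (hD : ∀ C, IsCompact C → (D ∩ C).Finite) (hDΓ : ∀ γ ∈ Γ, ∀ x ∈ D, γ * x * γ⁻¹ ∈ D)
    (hE : IsCompact E) :
    {C : Set G | ∃ R ∈ D, (∃ u ∈ E, IsConj u R) ∧ C = Γ.conjClassIn R}.Finite := by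
  obtain ⟨K, hK, hKΓ⟩ := Γ.exists_isCompact_forall_inv_mul_mem
  set C := (fun p : G × G => p.1⁻¹ * p.2 * p.1) '' (K ×ˢ E)
  have hC : IsCompact C := (hK.prod hE).image (by fun_prop)
  refine ((hD C hC).image Γ.conjClassIn).subset ?_
  rintro _ ⟨R, hRD, ⟨u, huE, hconj⟩, rfl⟩
  obtain ⟨c, rfl⟩ := isConj_iff.1 hconj
  obtain ⟨k, hk, hγ⟩ := hKΓ c⁻¹
  refine ⟨_, ⟨hDΓ _ hγ _ hRD, (k, u), ⟨hk, huE⟩, ?_⟩, Γ.conjClassIn_conj hγ _⟩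
  group

end ConjClassesIn

-- `SL2C` carries its own topology instance, defeq to Mathlib's on `SpecialLinearGroup` but not
-- found by instance search through it, so the instances we need are transferred by hand.
instance : IsTopologicalGroup SL2C := Matrix.SpecialLinearGroup.topologicalGroup

theorem isClosedEmbedding_coe_SL2C :
    IsClosedEmbedding ((↑) : SL2C → Matrix (Fin 2) (Fin 2) ℂ) :=
  Matrix.SpecialLinearGroup.isClosedEmbedding_val

instance : T2Space SL2C := isClosedEmbedding_coe_SL2C.isEmbedding.t2Space

instance : LocallyCompactSpace SL2C :=
  haveI : LocallyCompactSpace (Matrix (Fin 2) (Fin 2) ℂ) :=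
    inferInstanceAs (LocallyCompactSpace (Fin 2 → Fin 2 → ℂ))
  isClosedEmbedding_coe_SL2C.locallyCompactSpace

instance : IsClosed (Subgroup.center SL2C : Set SL2C) := by
  rw [Subgroup.coe_center, ← Set.centralizer_univ]
  exact Set.isClosed_centralizer _

theorem conj_mem_doubleCoset {Γ : Subgroup PSL2C} {g γ x : PSL2C} (hγ : γ ∈ Γ)
    (hx : x ∈ doubleCoset Γ g) : γ * x * γ⁻¹ ∈ doubleCoset Γ g := by
  obtain ⟨γ₁, h₁, γ₂, h₂, rfl⟩ := hx
  exact ⟨γ * γ₁, Γ.mul_mem hγ h₁, γ₂ * γ⁻¹, Γ.mul_mem h₂ (Γ.inv_mem hγ), by group⟩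

theorem doubleCoset_inv_subset_biUnion_smul {Γ : Subgroup PSL2C} {α : PSL2C}
    (h : (conjSG Γ α).relIndex Γ ≠ 0) :
    ∃ s : Set PSL2C, s.Finite ∧ doubleCoset Γ α⁻¹ ⊆ ⋃ r ∈ s, r • (Γ : Set PSL2C) := by
  have : ((conjSG Γ α).subgroupOf Γ).FiniteIndex := ⟨h⟩
  refine ⟨range fun c : Γ ⧸ (conjSG Γ α).subgroupOf Γ => (c.out : PSL2C) * α⁻¹,
    finite_range _, ?_⟩
  rintro _ ⟨γ₁, h₁, γ₂, h₂, rfl⟩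
  -- `γ₁ = r · α⁻¹gα` with `r` the representative of `γ₁ (Γ ∩ α⁻¹Γα)`, so `γ₁α⁻¹γ₂ = rα⁻¹ · gγ₂`.
  set c : Γ ⧸ (conjSG Γ α).subgroupOf Γ := QuotientGroup.mk ⟨γ₁, h₁⟩
  obtain ⟨g, hg, hgc⟩ := Subgroup.mem_map.1
    (Subgroup.mem_subgroupOf.1 (QuotientGroup.eq.1 (QuotientGroup.out_eq' c)))
  have hγ₁ : γ₁ = c.out * (α⁻¹ * g * α) := by
    simp only [MulEquiv.coe_toMonoidHom, MulAut.conj_apply, inv_inv] at hgc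
    rw [hgc]
    simp
  refine mem_biUnion ⟨c, rfl⟩ ⟨g * γ₂, Γ.mul_mem hg h₂, ?_⟩
  simp only [smul_eq_mul, hγ₁]
  group

theorem finite_doubleCoset_inv_inter_of_isCompact {Γ : Subgroup PSL2C} [DiscreteTopology Γ]
    {α : PSL2C} (h : (conjSG Γ α).relIndex Γ ≠ 0) {C : Set PSL2C} (hC : IsCompact C) :
    (doubleCoset Γ α⁻¹ ∩ C).Finite := by
  obtain ⟨s, hs, hsub⟩ := doubleCoset_inv_subset_biUnion_smul h
  refine (hs.biUnion fun r _ => Γ.finite_smul_inter_of_isCompact r hC).subset ?_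
  rw [← iUnion₂_inter]
  exact inter_subset_inter_left C hsub

noncomputable def ellipticModel (φ : ℝ) : PSL2C :=
  projMk (dMat (Complex.exp (φ * Complex.I / 2)) (Complex.exp_ne_zero _))

theorem continuous_ellipticModel : Continuous ellipticModel := by
  refine QuotientGroup.continuous_mk.comp (continuous_induced_rng.2 ?_)
  simp only [dMat, ← Complex.exp_neg]
  fun_prop

theorem periodic_ellipticModel : Function.Periodic ellipticModel (4 * Real.pi) := fun φ => by
  have : Complex.exp (↑(φ + 4 * Real.pi) * Complex.I / 2) = Complex.exp (φ * Complex.I / 2) := by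
    rw [← Complex.exp_periodic (φ * Complex.I / 2)]
    push_cast
    ring_nf
  simp only [ellipticModel, this]

theorem isCompact_range_ellipticModel : IsCompact (range ellipticModel) :=
  periodic_ellipticModel.compact_of_continuous (by positivity) continuous_ellipticModel

theorem IsElliptic.exists_isConj_ellipticModel {T : PSL2C} (hT : IsElliptic T) :
    ∃ u ∈ range ellipticModel, IsConj u T := by
  obtain ⟨-, φ, hφ⟩ := hT
  exact ⟨_, ⟨φ, rfl⟩, hφ⟩

theorem stmt_12_general (Γ : Subgroup PSL2C)
    (hdisc : DiscreteTopology Γ) (hcpt : CompactSpace (PSL2C ⧸ Γ))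
    (α : PSL2C) (hα : InCommensurator Γ α) :
    {C : Set PSL2C | ∃ R ∈ doubleCoset Γ α⁻¹, IsElliptic R ∧
      C = {x | ∃ σ ∈ Γ, x = σ⁻¹ * R * σ}}.Finite := by
  refine (Γ.finite_conjClassIn_of_isConj_mem
    (fun C hC => finite_doubleCoset_inv_inter_of_isCompact hα.1 hC)
    (fun γ hγ x hx => conj_mem_doubleCoset hγ hx) isCompact_range_ellipticModel).subset ?_
  rintro _ ⟨R, hR, hell, rfl⟩
  exact ⟨R, hR, hell.exists_isConj_ellipticModel, rfl⟩

/-- Let `Γ` be a cocompact Kleinian group and `α ∈ comm(Γ) \ Γ`.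
There are only finitely many `Γ`-conjugacy classes of elliptic elements in the double
coset `Γα⁻¹Γ`. -/
theorem stmt_12 (Γ : Subgroup PSL2C)
    (hdisc : DiscreteTopology Γ) (hcpt : CompactSpace (PSL2C ⧸ Γ))
    (α : PSL2C) (hα : InCommensurator Γ α) (hαΓ : α ∉ Γ) :
    {C : Set PSL2C | ∃ R ∈ doubleCoset Γ α⁻¹, IsElliptic R ∧
      C = {x | ∃ σ ∈ Γ, x = σ⁻¹ * R * σ}}.Finite :=
  stmt_12_general Γ hdisc hcpt α hα
end
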